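/- Let 𝓘 = (I₁,…,I_k) be a geometric chain of k ideals in the root poset of Φ, and define I̲_{k+1} = ⋃_{i+j=k+1} ((I_i + I_j) ∩ Φ⁺) ∪ I_k ∪ S and I̲_i = I_i for i ∈ [k]. Then 𝓘̲ = (I̲₁,…,I̲_{k+1}) is a positive geometric chain of k+1 ideals in the root poset of Φ. -/

import Mathlib

open scoped Pointwise RealInnerProductSpace

/-- A crystallographic root system together with a choice of simple system. -/
structure RootSystemData (V : Type*) [NormedAddCommGroup V] [InnerProductSpace ℝ V] where
  Φ : Set V
  S : Set V
  finite : Φ.Finite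
  ne_zero : ∀ α ∈ Φ, α ≠ 0
  reflect_mem : ∀ α ∈ Φ, ∀ β ∈ Φ, β - (2 * (inner ℝ β α : ℝ) / (inner ℝ α α : ℝ)) • α ∈ Φ
  crystal : ∀ α ∈ Φ, ∀ β ∈ Φ, ∃ m : ℤ, 2 * (inner ℝ β α : ℝ) / (inner ℝ α α : ℝ) = (m : ℝ)
  reduced : ∀ α ∈ Φ, ∀ t : ℝ, t • α ∈ Φ → t = 1 ∨ t = -1
  S_sub : S ⊆ Φ
  S_indep : LinearIndependent ℝ ((↑) : S → V)
  decomp : ∀ α ∈ Φ, α ∈ AddSubmonoid.closure S ∨ -α ∈ AddSubmonoid.closure S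

namespace RootSystemData

variable {V : Type*} [NormedAddCommGroup V] [InnerProductSpace ℝ V] (D : RootSystemData V)

/-- The positive roots. -/
def pos : Set V := {α ∈ D.Φ | α ∈ AddSubmonoid.closure D.S}

/-- The root poset order: `α ≤ β` iff `β - α` is a nonnegative integer combination
of simple roots. -/
def rle (α β : V) : Prop := β - α ∈ AddSubmonoid.closure D.S

/-- An (order) ideal of the root poset. -/
def IsIdeal (I : Set V) : Prop :=
  I ⊆ D.pos ∧ ∀ α ∈ I, ∀ β ∈ D.pos, D.rle β α → β ∈ I

/-- The order filters complementary to a chain of ideals, with the conventions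
`J 0 = Φ⁺` (as `I 0 = ∅`) and `J i = J k` for `i > k`. -/
def Jf (k : ℕ) (I : ℕ → Set V) (i : ℕ) : Set V := D.pos \ I (min i k)

/-- A geometric chain of `k` ideals in the root poset. -/
structure IsGeomChain (k : ℕ) (I : ℕ → Set V) : Prop where
  zero : I 0 = ∅
  ideal : ∀ i, 1 ≤ i → i ≤ k → D.IsIdeal (I i)
  mono : ∀ i j, i ≤ j → j ≤ k → I i ⊆ I j
  geomI : ∀ i j, i + j ≤ k → (I i + I j) ∩ D.pos ⊆ I (i + j)
  geomJ : ∀ i j, (D.Jf k I i + D.Jf k I j) ∩ D.pos ⊆ D.Jf k I (i + j)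

/-- A chain of ideals is positive if `S ⊆ I k`. -/
def IsPositiveChain (k : ℕ) (I : ℕ → Set V) : Prop := D.S ⊆ I k

/-- The set of values `r₁ + … + r_m` over all expressions `α = α₁ + … + α_m` with
`α_i ∈ I (r i)` and `1 ≤ r i ≤ k`; its least element (when it exists) is `r_α(𝓘)`. -/
def rVals (_D : RootSystemData V) (k : ℕ) (I : ℕ → Set V) (α : V) : Set ℕ :=
  {N | ∃ m : ℕ, ∃ a : Fin m → V, ∃ r : Fin m → ℕ,
    (∀ i, 1 ≤ r i ∧ r i ≤ k ∧ a i ∈ I (r i)) ∧ (∑ i, a i) = α ∧ (∑ i, r i) = N}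

/-- The extension `𝓘̲` of a geometric chain of `k` ideals to a chain of `k+1` ideals,
with `I̲_{k+1} = ⋃_{i+j=k+1} ((I_i + I_j) ∩ Φ⁺) ∪ I_k ∪ S`. -/
def Ibar (k : ℕ) (I : ℕ → Set V) : ℕ → Set V := fun i =>
  if i ≤ k then I i
  else (⋃ (p : ℕ × ℕ) (_ : p.1 + p.2 = k + 1), (I p.1 + I p.2) ∩ D.pos) ∪ I k ∪ D.S

/-- `α` is a rank `r` indecomposable element of the chain of ideals `I`. -/
def IsIndec (k : ℕ) (I : ℕ → Set V) (r : ℕ) (α : V) : Prop :=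
  α ∈ I r ∧ IsLeast (D.rVals k I α) r ∧
  (∀ i j, i + j = r → α ∉ I i + I j) ∧
  (∀ β ∈ D.pos, ∀ t, t ≤ k → IsLeast (D.rVals k I (α + β)) t → β ∈ I (t - r))

/-- The complement of the `k`-Catalan arrangement of `Φ`. -/
def catComp (k : ℕ) : Set V :=
  {x | ∀ α ∈ D.Φ, ∀ r : ℕ, r ≤ k → (inner ℝ x α : ℝ) ≠ (r : ℝ)}

/-- A region of the `k`-Catalan arrangement: a connected component of the complement. -/
def IsRegion (k : ℕ) (R : Set V) : Prop :=
  ∃ x ∈ D.catComp k, R = connectedComponentIn (D.catComp k) x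

/-- A dominant region of the `k`-Catalan arrangement. -/
def IsDomRegion (k : ℕ) (R : Set V) : Prop :=
  D.IsRegion k R ∧ ∀ x ∈ R, ∀ α ∈ D.pos, 0 < (inner ℝ x α : ℝ)

/-- The complement of the affine Coxeter arrangement of `Φ`. -/
def affComp : Set V := {x | ∀ α ∈ D.Φ, ∀ r : ℤ, (inner ℝ x α : ℝ) ≠ (r : ℝ)}

/-- An alcove: a connected component of the complement of the affine Coxeter arrangement. -/
def IsAlcove (A : Set V) : Prop :=
  ∃ x ∈ D.affComp, A = connectedComponentIn D.affComp x

/-- The hyperplane `H_α^r` supports a facet of `R`. -/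
def IsWall (_D : RootSystemData V) (R : Set V) (α : V) (r : ℝ) : Prop :=
  ∃ x, (inner ℝ x α : ℝ) = r ∧ ∃ ε > 0, ∀ y, (inner ℝ y α : ℝ) = r → dist y x < ε → y ∈ closure R

/-- `H_α^r` is a ceiling of the dominant region (or alcove) `R`: a wall not through
the origin with `R` on the same side as the origin. -/
def IsCeiling (R : Set V) (α : V) (r : ℝ) : Prop :=
  D.IsWall R α r ∧ 0 < r ∧ ∀ x ∈ R, (inner ℝ x α : ℝ) < r

/-- `H_α^r` is a floor of the dominant region (or alcove) `R`: a wall not through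
the origin separating `R` from the origin. -/
def IsFloor (R : Set V) (α : V) (r : ℝ) : Prop :=
  D.IsWall R α r ∧ 0 < r ∧ ∀ x ∈ R, r < (inner ℝ x α : ℝ)

/-- The chain of ideals `θ(R)` associated to a dominant region `R`. -/
def theta (R : Set V) : ℕ → Set V := fun i =>
  {α ∈ D.pos | ∀ x ∈ R, (inner ℝ x α : ℝ) < (i : ℝ)}

/-- `B` is the maximal alcove of the (bounded) region corresponding to the positive chain
of ideals `I`, i.e. the alcove with `r(B,α) = r_α(𝓘)` for all positive roots `α`. -/
def IsMaxAlcoveOf (k : ℕ) (I : ℕ → Set V) (B : Set V) : Prop :=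
  D.IsAlcove B ∧ ∀ α ∈ D.pos, ∃ r : ℕ, IsLeast (D.rVals k I α) r ∧
    ∀ x ∈ B, ((r : ℝ) - 1 < (inner ℝ x α : ℝ) ∧ (inner ℝ x α : ℝ) < (r : ℝ))

/-- The root system `Φ` is irreducible. -/
def Irred : Prop :=
  ∀ Φ₁ Φ₂ : Set V, Φ₁ ∪ Φ₂ = D.Φ → (∀ a ∈ Φ₁, ∀ b ∈ Φ₂, (inner ℝ a b : ℝ) = 0) →
    Φ₁ = ∅ ∨ Φ₂ = ∅

end RootSystemData

/-!
Two facts about roots drive the proof. If `δ + ε - s` is a root for roots `δ, ε` and a simple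
root `s`, then `δ - s` or `ε - s` is a root; applied to `δ ∈ I_a`, `ε ∈ I_b`, this shows that
`I̲_{k+1}` is closed under subtracting simple roots, and such a set of positive roots is an ideal
because every `β ≤ α` is reached from `α` by simple steps within `Φ⁺`.

For the filter condition in degree `k + 1`, let `β ∈ J̲_i`, `γ ∈ J̲_j` with `i + j = k + 1` and
`β + γ = δ + ε` with `δ ∈ I_a`, `ε ∈ I_b`, `a + b = k + 1`. Expanding `0 < ⟪β + γ, δ + ε⟫` gives a
pair, say `β, δ`, with positive inner product, so `β = δ` or `±(β - δ)` is a positive root. The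
geometric condition for `𝓘` puts this root into `I_{a-i}` (or `I_{b-j}`), and adding it back
places `γ` in `I̲_j` (or `β` in `I̲_i`), a contradiction.
-/

namespace RootSystemData

variable {V : Type*} [NormedAddCommGroup V] [InnerProductSpace ℝ V] {D : RootSystemData V}

section Roots

variable {α β δ ε s : V}

lemma inner_self_pos_of_mem (hα : α ∈ D.Φ) : 0 < ⟪α, α⟫ :=
  real_inner_self_pos.mpr (D.ne_zero α hα)

lemma neg_mem (hα : α ∈ D.Φ) : -α ∈ D.Φ := by
  have h := D.reflect_mem α hα α hα
  rwa [mul_div_assoc, div_self (inner_self_pos_of_mem hα).ne', mul_one, two_smul,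
    sub_add_cancel_left] at h

/-- The crystallographic integers `2⟪α, β⟫/⟪β, β⟫` and `2⟪β, α⟫/⟪α, α⟫` are positive; if either
is `1`, a reflection produces `±(α - β)`, and if both are `≥ 2` then `‖α - β‖² ≤ 0`. -/
lemma sub_mem_of_inner_pos (hα : α ∈ D.Φ) (hβ : β ∈ D.Φ) (hne : α ≠ β) (hip : 0 < ⟪α, β⟫) :
    α - β ∈ D.Φ := by
  have hαα := inner_self_pos_of_mem hα
  have hββ := inner_self_pos_of_mem hβ
  obtain ⟨m, hm⟩ := D.crystal β hβ α hα
  obtain ⟨n, hn⟩ := D.crystal α hα β hβ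
  rw [real_inner_comm] at hn
  have hm0 : (0 : ℝ) < m := hm ▸ by positivity
  have hn0 : (0 : ℝ) < n := hn ▸ by positivity
  rcases eq_or_lt_of_le (show 1 ≤ m by exact_mod_cast hm0) with rfl | hm2
  · have h := D.reflect_mem β hβ α hα
    rwa [hm, Int.cast_one, one_smul] at h
  rcases eq_or_lt_of_le (show 1 ≤ n by exact_mod_cast hn0) with rfl | hn2
  · have h := D.reflect_mem α hα β hβ
    rw [real_inner_comm, hn] at h
    simpa using neg_mem h
  exfalso
  have hm2' : (2 : ℝ) ≤ m := by exact_mod_cast hm2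
  have hn2' : (2 : ℝ) ≤ n := by exact_mod_cast hn2
  rw [← hm, le_div_iff₀ hββ] at hm2'
  rw [← hn, le_div_iff₀ hαα] at hn2'
  have h : ⟪α - β, α - β⟫ ≤ 0 := by
    rw [inner_sub_sub_self, real_inner_comm α β]
    linarith
  exact hne (sub_eq_zero.mp (real_inner_self_nonpos.mp h))

lemma add_mem_of_inner_neg (hα : α ∈ D.Φ) (hβ : β ∈ D.Φ) (hne : α ≠ -β) (hip : ⟪α, β⟫ < 0) :
    α + β ∈ D.Φ := by
  simpa using sub_mem_of_inner_pos hα (neg_mem hβ) hne (by rw [inner_neg_right]; linarith)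

/-- If neither `⟪δ, s⟫` nor `⟪ε, s⟫` is positive, then `⟪δ + ε - s, δ + ε⟫ > 0`, so subtracting
`δ` or `ε` from the root `δ + ε - s` gives a root. -/
lemma sub_mem_or_sub_mem_of_add_sub_mem (hδ : δ ∈ D.Φ) (hε : ε ∈ D.Φ) (hs : s ∈ D.Φ)
    (hx : δ + ε - s ∈ D.Φ) (hδε : δ + ε ≠ 0) (hδs : δ ≠ s) (hεs : ε ≠ s) :
    δ - s ∈ D.Φ ∨ ε - s ∈ D.Φ := by
  by_cases h₁ : 0 < ⟪δ, s⟫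
  · exact Or.inl (sub_mem_of_inner_pos hδ hs hδs h₁)
  by_cases h₂ : 0 < ⟪ε, s⟫
  · exact Or.inr (sub_mem_of_inner_pos hε hs hεs h₂)
  have hpos : 0 < ⟪δ + ε - s, δ⟫ + ⟪δ + ε - s, ε⟫ := by
    rw [← inner_add_right, inner_sub_left, real_inner_comm (δ + ε) s, inner_add_left δ ε s]
    linarith [real_inner_self_pos.mpr hδε]
  rcases lt_or_ge 0 ⟪δ + ε - s, δ⟫ with h | h
  · have hne : δ + ε - s ≠ δ := fun h => hεs (by rw [← sub_eq_zero] at h ⊢; rw [← h]; abel)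
    right
    simpa only [show δ + ε - s - δ = ε - s by abel] using sub_mem_of_inner_pos hx hδ hne h
  · have hne : δ + ε - s ≠ ε := fun h => hδs (by rw [← sub_eq_zero] at h ⊢; rw [← h]; abel)
    left
    simpa only [show δ + ε - s - ε = δ - s by abel] using
      sub_mem_of_inner_pos hx hε hne (by linarith)

end Roots

section Height

variable (D)

lemma exists_linearMap_eq_one_on_S : ∃ ℓ : V →ₗ[ℝ] ℝ, ∀ s ∈ D.S, ℓ s = 1 := by
  let b := Module.Basis.extend (show LinearIndepOn ℝ id D.S from D.S_indep)
  refine ⟨b.constr ℝ fun _ => 1, fun s hs => ?_⟩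
  have := b.constr_basis ℝ (fun _ => (1 : ℝ)) ⟨s, Module.Basis.subset_extend _ hs⟩
  rwa [Module.Basis.extend_apply_self] at this

noncomputable def height : V →ₗ[ℝ] ℝ := D.exists_linearMap_eq_one_on_S.choose

variable {D} {α β γ s v : V}

lemma height_of_mem_S (hs : s ∈ D.S) : D.height s = 1 :=
  D.exists_linearMap_eq_one_on_S.choose_spec s hs

lemma one_le_height_of_mem_closure (hv : v ∈ AddSubmonoid.closure D.S) (hv0 : v ≠ 0) :
    1 ≤ D.height v := by
  obtain ⟨L, hLS, rfl⟩ := AddSubmonoid.exists_list_of_mem_closure hv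
  have hL : L ≠ [] := by rintro rfl; exact hv0 List.sum_nil
  rw [map_list_sum, List.map_congr_left fun x hx => height_of_mem_S (hLS x hx), List.map_const',
    List.sum_replicate, nsmul_one, Nat.one_le_cast]
  exact List.length_pos_iff.mpr hL

lemma one_le_height (hα : α ∈ D.pos) : 1 ≤ D.height α :=
  one_le_height_of_mem_closure hα.2 (D.ne_zero α hα.1)

lemma sub_mem_pos_of_mem_S (hα : α ∈ D.pos) (hs : s ∈ D.S) (h : α - s ∈ D.Φ) :
    α - s ∈ D.pos := by
  refine ⟨h, (D.decomp _ h).resolve_right fun hneg => ?_⟩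
  have := one_le_height_of_mem_closure hneg (neg_ne_zero.mpr (D.ne_zero _ h))
  rw [map_neg, map_sub, height_of_mem_S hs] at this
  linarith [one_le_height hα]

lemma add_notMem_S (hβ : β ∈ D.pos) (hγ : γ ∈ D.pos) : β + γ ∉ D.S := fun h => by
  have := height_of_mem_S h
  rw [map_add] at this
  linarith [one_le_height hβ, one_le_height hγ]

lemma mem_pos_of_mem_S (hs : s ∈ D.S) : s ∈ D.pos :=
  ⟨D.S_sub hs, AddSubmonoid.subset_closure hs⟩

/-- As `0 < ⟪α - β, α - β⟫`, some simple root `s` occurring in `α - β` has `⟪α, s⟫ > 0` or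
`⟪β, s⟫ < 0`. -/
lemma exists_mem_sub_mem_pos_or_add_mem_pos (hα : α ∈ D.pos) (hβ : β ∈ D.pos) (hne : α ≠ β)
    {L : List V} (hLS : ∀ x ∈ L, x ∈ D.S) (hL : L.sum = α - β) :
    ∃ s ∈ L, α - s ∈ D.pos ∨ β + s ∈ D.pos := by
  have hμ : α - β ∈ AddSubmonoid.closure D.S :=
    hL ▸ AddSubmonoid.list_sum_mem _ fun x hx => AddSubmonoid.subset_closure (hLS x hx)
  have hsum : (L.map fun _ => (0 : ℝ)).sum < (L.map fun x => ⟪α - β, x⟫).sum := by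
    have := map_list_sum (innerₛₗ ℝ (α - β)) L
    rw [coe_innerₛₗ_apply] at this
    rw [List.map_const', List.sum_replicate, smul_zero, ← this, hL]
    exact real_inner_self_pos.mpr (sub_ne_zero.mpr hne)
  obtain ⟨s, hsL, hs⟩ := List.exists_lt_of_sum_lt _ _ hsum
  have hsS := hLS s hsL
  rw [inner_sub_left] at hs
  rcases lt_or_ge 0 ⟪α, s⟫ with hsα | hsα
  · refine ⟨s, hsL, Or.inl (sub_mem_pos_of_mem_S hα hsS ?_)⟩
    refine sub_mem_of_inner_pos hα.1 (D.S_sub hsS) (fun hαs => ?_) hsα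
    subst hαs
    linarith [map_sub D.height α β, one_le_height hβ, height_of_mem_S hsS,
      one_le_height_of_mem_closure hμ (sub_ne_zero.mpr hne)]
  · refine ⟨s, hsL, Or.inr ⟨?_, AddSubmonoid.add_mem _ hβ.2 (AddSubmonoid.subset_closure hsS)⟩⟩
    refine add_mem_of_inner_neg hβ.1 (D.S_sub hsS) (fun hβs => ?_) (by linarith)
    have := one_le_height hβ
    rw [hβs, map_neg, height_of_mem_S hsS] at this
    linarith

end Height

section Ideals

variable {I X : Set V} {δ s : V}

lemma IsIdeal.sub_mem (hI : D.IsIdeal I) (hδ : δ ∈ I) (hs : s ∈ D.S) (hδs : δ - s ∈ D.pos) :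
    δ - s ∈ I :=
  hI.2 δ hδ _ hδs (by rw [rle, sub_sub_cancel]; exact AddSubmonoid.subset_closure hs)

lemma isIdeal_of_sub_mem (hX : X ⊆ D.pos)
    (hstep : ∀ α ∈ X, ∀ s ∈ D.S, α - s ∈ D.pos → α - s ∈ X) : D.IsIdeal X := by
  classical
  refine ⟨hX, fun α hα β hβ hle => ?_⟩
  obtain ⟨L, hLS, hL⟩ := AddSubmonoid.exists_list_of_mem_closure hle
  clear hle
  induction hn : L.length generalizing α β L with
  | zero =>
    rw [List.length_eq_zero_iff.mp hn, List.sum_nil, eq_comm, sub_eq_zero] at hL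
    exact hL ▸ hα
  | succ n ih =>
    by_cases hαβ : α = β
    · exact hαβ ▸ hα
    obtain ⟨s, hsL, hstep'⟩ := exists_mem_sub_mem_pos_or_add_mem_pos (hX hα) hβ hαβ hLS hL
    have hs := hLS s hsL
    have hLs : L.sum = s + (L.erase s).sum := by
      rw [(List.perm_cons_erase hsL).sum_eq, List.sum_cons]
    have hLS' : ∀ x ∈ L.erase s, x ∈ D.S := fun x hx => hLS x (List.mem_of_mem_erase hx)
    have hn' : (L.erase s).length = n := by rw [List.length_erase_of_mem hsL, hn]; rfl
    rcases hstep' with hdown | hup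
    · exact ih (α - s) (hstep α hα s hs hdown) β hβ (L.erase s) hLS'
        (by rw [sub_right_comm, ← hL, hLs, add_sub_cancel_left]) hn'
    · have := ih α hα (β + s) hup (L.erase s) hLS'
        (by rw [← sub_sub, ← hL, hLs, add_sub_cancel_left]) hn'
      simpa using hstep _ this s hs (by rwa [add_sub_cancel_right])

end Ideals

section Chains

variable {k : ℕ} {I : ℕ → Set V}

lemma jf_antitone (hmono : ∀ i j, i ≤ j → j ≤ k → I i ⊆ I j) : Antitone (D.Jf k I) :=
  fun _ _ hij _ hx => ⟨hx.1, fun hxI =>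
    hx.2 (hmono _ _ (min_le_min_right k hij) (min_le_right _ _) hxI)⟩

lemma ibar_of_le {i : ℕ} (hi : i ≤ k) : D.Ibar k I i = I i :=
  if_pos hi

lemma mem_ibar_succ {x : V} :
    x ∈ D.Ibar k I (k + 1) ↔
      (∃ a b, a + b = k + 1 ∧ x ∈ I a + I b ∧ x ∈ D.pos) ∨ x ∈ I k ∨ x ∈ D.S := by
  simp only [Ibar, if_neg (Nat.not_succ_le_self k), Set.mem_union, Set.mem_iUnion,
    Set.mem_inter_iff, Prod.exists, exists_prop, or_assoc]

lemma jf_ibar_subset (i : ℕ) : D.Jf (k + 1) (D.Ibar k I) i ⊆ D.Jf k I i := by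
  rintro x ⟨hx, hxI⟩
  refine ⟨hx, fun hI => hxI ?_⟩
  rcases le_or_gt i k with hi | hi
  · rw [min_eq_left hi] at hI
    rwa [min_eq_left (by omega), ibar_of_le hi]
  · rw [min_eq_right hi.le] at hI
    rw [min_eq_right hi, mem_ibar_succ]
    exact Or.inr (Or.inl hI)

namespace IsGeomChain

lemma ne_zero_of_mem (h : D.IsGeomChain k I) {a : ℕ} {x : V} (hx : x ∈ I a) : a ≠ 0 := by
  rintro rfl
  simp [h.zero] at hx

lemma isIdeal (h : D.IsGeomChain k I) {i : ℕ} (hi : i ≤ k) : D.IsIdeal (I i) := by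
  rcases Nat.eq_zero_or_pos i with rfl | hi0
  · simp [IsIdeal, h.zero]
  · exact h.ideal i hi0 hi

lemma jf_zero (h : D.IsGeomChain k I) : D.Jf k I 0 = D.pos := by
  simp [Jf, h.zero]

lemma lt_and_mem_of_add_mem (h : D.IsGeomChain k I) {j b : ℕ} {γ φ : V} (hγ : γ ∈ D.Jf k I j)
    (hφ : φ ∈ D.pos) (hb : b ≤ k) (hγφ : γ + φ ∈ I b) : j < b ∧ φ ∈ I (b - j) := by
  have hpos : γ + φ ∈ D.pos := (h.isIdeal hb).1 hγφ
  have hj : j < b := by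
    by_contra! hbj
    have := (h.geomJ j 0 ⟨Set.add_mem_add hγ (h.jf_zero ▸ hφ), hpos⟩).2
    exact this (h.mono b _ (le_min hbj hb) (min_le_right _ _) hγφ)
  refine ⟨hj, by_contra fun hφI => ?_⟩
  have hφJ : φ ∈ D.Jf k I (b - j) := ⟨hφ, by rwa [min_eq_left (by omega)]⟩
  have := (h.geomJ j (b - j) ⟨Set.add_mem_add hγ hφJ, hpos⟩).2
  rw [Nat.add_sub_cancel' hj.le, min_eq_left hb] at this
  exact this hγφ

lemma ibar_mono (h : D.IsGeomChain k I) :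
    ∀ i j, i ≤ j → j ≤ k + 1 → D.Ibar k I i ⊆ D.Ibar k I j := by
  intro i j hij hj
  rcases le_or_gt j k with hjk | hjk
  · rw [ibar_of_le (hij.trans hjk), ibar_of_le hjk]
    exact h.mono i j hij hjk
  obtain rfl : j = k + 1 := by omega
  rcases le_or_gt i k with hik | hik
  · intro x hx
    rw [ibar_of_le hik] at hx
    exact mem_ibar_succ.mpr (Or.inr (Or.inl (h.mono i k hik le_rfl hx)))
  · obtain rfl : i = k + 1 := by omega
    rfl

lemma ibar_geomI (h : D.IsGeomChain k I) :
    ∀ i j, i + j ≤ k + 1 → (D.Ibar k I i + D.Ibar k I j) ∩ D.pos ⊆ D.Ibar k I (i + j) := by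
  intro i j hij
  rcases le_or_gt (i + j) k with hk | hk
  · rw [ibar_of_le hk, ibar_of_le (by omega), ibar_of_le (by omega)]
    exact h.geomI i j hk
  rintro _ ⟨⟨u, hu, v, hv, rfl⟩, hx⟩
  have hi : i ≠ 0 := by
    rintro rfl
    rw [ibar_of_le (Nat.zero_le k)] at hu
    exact h.ne_zero_of_mem hu rfl
  have hj : j ≠ 0 := by
    rintro rfl
    rw [ibar_of_le (Nat.zero_le k)] at hv
    exact h.ne_zero_of_mem hv rfl
  rw [ibar_of_le (by omega)] at hu
  rw [ibar_of_le (by omega)] at hv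
  rw [show i + j = k + 1 by omega, mem_ibar_succ]
  exact Or.inl ⟨i, j, by omega, Set.add_mem_add hu hv, hx⟩

lemma ibar_succ_subset_pos (h : D.IsGeomChain k I) : D.Ibar k I (k + 1) ⊆ D.pos := by
  intro x hx
  rcases mem_ibar_succ.mp hx with ⟨-, -, -, -, hx⟩ | hx | hx
  · exact hx
  · exact (h.isIdeal le_rfl).1 hx
  · exact mem_pos_of_mem_S hx

lemma sub_mem_ibar_succ_of_mem_add (h : D.IsGeomChain k I) {a b : ℕ} {δ ε s : V}
    (hab : a + b = k + 1) (hδ : δ ∈ I a) (hε : ε ∈ I b) (hδε : δ + ε ∈ D.pos) (hs : s ∈ D.S)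
    (hpos : δ + ε - s ∈ D.pos) : δ + ε - s ∈ D.Ibar k I (k + 1) := by
  have ha : a ≤ k := by have := h.ne_zero_of_mem hε; omega
  have hb : b ≤ k := by have := h.ne_zero_of_mem hδ; omega
  by_cases hεs : ε = s
  · rw [hεs, add_sub_cancel_right]
    exact h.ibar_mono a (k + 1) (by omega) le_rfl (by rwa [ibar_of_le ha])
  by_cases hδs : δ = s
  · rw [hδs, add_sub_cancel_left]
    exact h.ibar_mono b (k + 1) (by omega) le_rfl (by rwa [ibar_of_le hb])
  have hδpos := (h.isIdeal ha).1 hδ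
  have hεpos := (h.isIdeal hb).1 hε
  refine mem_ibar_succ.mpr (Or.inl ⟨a, b, hab, ?_, hpos⟩)
  rcases D.sub_mem_or_sub_mem_of_add_sub_mem hδpos.1 hεpos.1 (D.S_sub hs) hpos.1
    (D.ne_zero _ hδε.1) hδs hεs with hδs' | hεs'
  · rw [add_sub_right_comm]
    exact Set.add_mem_add ((h.isIdeal ha).sub_mem hδ hs (sub_mem_pos_of_mem_S hδpos hs hδs')) hε
  · rw [add_sub_assoc]
    exact Set.add_mem_add hδ ((h.isIdeal hb).sub_mem hε hs (sub_mem_pos_of_mem_S hεpos hs hεs'))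

lemma sub_mem_ibar_succ (h : D.IsGeomChain k I) {α s : V} (hα : α ∈ D.Ibar k I (k + 1))
    (hs : s ∈ D.S) (hαs : α - s ∈ D.pos) : α - s ∈ D.Ibar k I (k + 1) := by
  rcases mem_ibar_succ.mp hα with ⟨a, b, hab, ⟨δ, hδ, ε, hε, rfl⟩, hδε⟩ | hk | hS
  · exact h.sub_mem_ibar_succ_of_mem_add hab hδ hε hδε hs hαs
  · exact mem_ibar_succ.mpr (Or.inr (Or.inl ((h.isIdeal le_rfl).sub_mem hk hs hαs)))
  · refine absurd ?_ (add_notMem_S (mem_pos_of_mem_S hs) hαs)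
    rwa [add_sub_cancel]

lemma isIdeal_ibar (h : D.IsGeomChain k I) {i : ℕ} (hi : i ≤ k + 1) :
    D.IsIdeal (D.Ibar k I i) := by
  rcases le_or_gt i k with hik | hik
  · rw [ibar_of_le hik]
    exact h.isIdeal hik
  obtain rfl : i = k + 1 := by omega
  exact isIdeal_of_sub_mem h.ibar_succ_subset_pos fun _ hα _ hs hαs =>
    h.sub_mem_ibar_succ hα hs hαs

lemma lt_of_mem_jf_ibar (h : D.IsGeomChain k I) {x : V} {m n : ℕ} (hm : m ≤ k + 1)
    (hx : x ∈ D.Jf (k + 1) (D.Ibar k I) m) (hn : n ≤ k) (hxI : x ∈ I n) : m < n := by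
  by_contra! hnm
  rw [Jf, min_eq_left hm] at hx
  exact hx.2 (h.ibar_mono n m hnm hm (by rwa [ibar_of_le hn]))

lemma false_of_sub_mem_pos (h : D.IsGeomChain k I) {i j a b : ℕ} {β γ δ ε : V}
    (hij : i + j = k + 1) (hab : a + b = k + 1)
    (hβ : β ∈ D.Jf (k + 1) (D.Ibar k I) i) (hγ : γ ∈ D.Jf (k + 1) (D.Ibar k I) j)
    (hδ : δ ∈ I a) (hε : ε ∈ I b) (hsum : β + γ = δ + ε) (hδβ : δ - β ∈ D.pos) : False := by
  have ha : a ≤ k := by have := h.ne_zero_of_mem hε; omega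
  have hb : b ≤ k := by have := h.ne_zero_of_mem hδ; omega
  obtain ⟨hia, hδβI⟩ :=
    h.lt_and_mem_of_add_mem (jf_ibar_subset i hβ) hδβ ha (by rwa [add_sub_cancel])
  have hγI : γ ∈ D.Ibar k I (b + (a - i)) := by
    refine h.ibar_geomI b (a - i) (by omega) ⟨?_, hγ.1⟩
    rw [ibar_of_le hb, ibar_of_le (by omega), show γ = ε + (δ - β) by
      rw [← add_sub_assoc, add_comm ε δ, ← hsum, add_sub_cancel_left]]
    exact Set.add_mem_add hε hδβI
  refine hγ.2 ?_
  rwa [min_eq_left (by omega), show j = b + (a - i) by omega]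

/-- For `β ≠ δ`, `β - δ` is a root; if it is negative apply `false_of_sub_mem_pos`, and if it is
positive apply it to `ε - γ = β - δ` with the roles of the two sides swapped. -/
lemma false_of_inner_pos (h : D.IsGeomChain k I) {i j a b : ℕ} {β γ δ ε : V}
    (hij : i + j = k + 1) (hab : a + b = k + 1)
    (hβ : β ∈ D.Jf (k + 1) (D.Ibar k I) i) (hγ : γ ∈ D.Jf (k + 1) (D.Ibar k I) j)
    (hδ : δ ∈ I a) (hε : ε ∈ I b) (hsum : β + γ = δ + ε) (hβδ : 0 < ⟪β, δ⟫) : False := by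
  have ha : a ≤ k := by have := h.ne_zero_of_mem hε; omega
  have hb : b ≤ k := by have := h.ne_zero_of_mem hδ; omega
  by_cases heq : β = δ
  · obtain rfl : γ = ε := add_left_cancel (heq ▸ hsum)
    subst heq
    have := h.lt_of_mem_jf_ibar (by omega) hβ ha hδ
    have := h.lt_of_mem_jf_ibar (by omega) hγ hb hε
    omega
  have hroot := D.sub_mem_of_inner_pos hβ.1.1 ((h.isIdeal ha).1 hδ).1 heq hβδ
  rcases D.decomp _ hroot with hpos | hneg
  · refine h.false_of_sub_mem_pos (by omega) (by omega) hγ hβ hε hδ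
      (by rw [add_comm, hsum, add_comm]) ⟨?_, ?_⟩
    all_goals rwa [show ε - γ = β - δ by rw [sub_eq_sub_iff_add_eq_add, hsum, add_comm]]
  · rw [neg_sub] at hneg
    exact h.false_of_sub_mem_pos hij hab hβ hγ hδ hε hsum
      ⟨by simpa using D.neg_mem hroot, hneg⟩

lemma add_notMem_ibar_succ (h : D.IsGeomChain k I) {i j : ℕ} {β γ : V} (hij : i + j = k + 1)
    (hβ : β ∈ D.Jf (k + 1) (D.Ibar k I) i) (hγ : γ ∈ D.Jf (k + 1) (D.Ibar k I) j)
    (hpos : β + γ ∈ D.pos) : β + γ ∉ D.Ibar k I (k + 1) := by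
  rw [mem_ibar_succ]
  rintro (⟨a, b, hab, ⟨δ, hδ, ε, hε, hsum⟩, -⟩ | hk | hS)
  · dsimp only at hsum
    have hip := real_inner_self_pos.mpr (D.ne_zero _ hpos.1)
    nth_rw 2 [← hsum] at hip
    simp only [inner_add_left, inner_add_right] at hip
    have hab' : b + a = k + 1 := by omega
    have hji : j + i = k + 1 := by omega
    have hsum' : γ + β = δ + ε := by rw [add_comm, hsum]
    rcases lt_or_ge 0 ⟪β, δ⟫ with h₁ | h₁
    · exact h.false_of_inner_pos hij hab hβ hγ hδ hε hsum.symm h₁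
    rcases lt_or_ge 0 ⟪β, ε⟫ with h₂ | h₂
    · exact h.false_of_inner_pos hij hab' hβ hγ hε hδ (by rw [← hsum, add_comm]) h₂
    rcases lt_or_ge 0 ⟪γ, δ⟫ with h₃ | h₃
    · exact h.false_of_inner_pos hji hab hγ hβ hδ hε hsum' h₃
    · exact h.false_of_inner_pos hji hab' hγ hβ hε hδ (by rw [hsum', add_comm]) (by linarith)
  · have := (h.geomJ i j ⟨Set.add_mem_add (jf_ibar_subset i hβ) (jf_ibar_subset j hγ), hpos⟩).2
    rw [hij, min_eq_right k.le_succ] at this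
    exact this hk
  · exact add_notMem_S hβ.1 hγ.1 hS

lemma ibar_geomJ (h : D.IsGeomChain k I) (i j : ℕ) :
    (D.Jf (k + 1) (D.Ibar k I) i + D.Jf (k + 1) (D.Ibar k I) j) ∩ D.pos ⊆
      D.Jf (k + 1) (D.Ibar k I) (i + j) := by
  rintro _ ⟨⟨β, hβ, γ, hγ, rfl⟩, hpos⟩
  dsimp only at hpos ⊢
  by_cases hij : i + j ≤ k
  · have := h.geomJ i j ⟨Set.add_mem_add (jf_ibar_subset i hβ) (jf_ibar_subset j hγ), hpos⟩
    rw [Jf, min_eq_left (hij.trans k.le_succ), ibar_of_le hij]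
    rwa [Jf, min_eq_left hij] at this
  have hanti := jf_antitone (D := D) h.ibar_mono
  refine ⟨hpos, ?_⟩
  rw [min_eq_right (by omega)]
  exact h.add_notMem_ibar_succ (i := min i (k + 1)) (j := k + 1 - min i (k + 1)) (by omega)
    (hanti (min_le_left _ _) hβ) (hanti (by omega) hγ) hpos

end IsGeomChain

end Chains

end RootSystemData

theorem statement4_general {V : Type*} [NormedAddCommGroup V] [InnerProductSpace ℝ V]
    (D : RootSystemData V) (k : ℕ) (I : ℕ → Set V)
    (h : D.IsGeomChain k I) :
    D.IsGeomChain (k + 1) (D.Ibar k I) ∧ D.IsPositiveChain (k + 1) (D.Ibar k I) :=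
  ⟨⟨by rw [RootSystemData.ibar_of_le k.zero_le, h.zero], fun _ _ hi => h.isIdeal_ibar hi,
      h.ibar_mono, h.ibar_geomI, h.ibar_geomJ⟩,
    fun _ hs => RootSystemData.mem_ibar_succ.mpr (Or.inr (Or.inr hs))⟩

/-- If `𝓘 = (I₁,…,I_k)` is a geometric chain of `k` ideals, then its
extension `𝓘̲ = (I̲₁,…,I̲_{k+1})` is a positive geometric chain of `k+1` ideals. -/
theorem statement4 {V : Type*} [NormedAddCommGroup V] [InnerProductSpace ℝ V]
    (D : RootSystemData V) (k : ℕ) (hk : 1 ≤ k) (I : ℕ → Set V)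
    (h : D.IsGeomChain k I) :
    D.IsGeomChain (k + 1) (D.Ibar k I) ∧ D.IsPositiveChain (k + 1) (D.Ibar k I) :=
  statement4_general D k I h
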